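/- For integers k, j ≥ 0: if μ > −1 then z ∂/∂z Q^μ_{k,j}(z,w) + (j+μ+1) Q^μ_{k,j}(z,w) = ((k+μ+1)(j+μ+1)/(μ+1)) Q^{μ+1}_{k,j}(z,w); and if μ > 0 then (1−zw) z ∂/∂z Q^μ_{k,j}(z,w) − [k(1−zw) + μ] Q^μ_{k,j}(z,w) = −μ Q^{μ−1}_{k,j}(z,w). These are identities of bivariate polynomials in (z,w). -/

import Mathlib

noncomputable def jacobiP (α β : ℝ) (n : ℕ) : Polynomial ℝ :=
  (n.factorial : ℝ)⁻¹ •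
    ∑ k ∈ Finset.range (n + 1),
      ((n.choose k : ℝ) * ((ascPochhammer ℝ (n - k)).eval ((k : ℝ) + α + 1)) *
          ((ascPochhammer ℝ k).eval ((n : ℝ) + α + β + 1))) •
        ((Polynomial.X - 1) * Polynomial.C (2⁻¹ : ℝ)) ^ k

noncomputable def zernikeQ (μ : ℝ) (k j : ℕ) : MvPolynomial (Fin 2) ℂ :=
  if j ≤ k then
    MvPolynomial.C ((((j.factorial : ℝ) / ((ascPochhammer ℝ j).eval (μ + 1)) : ℝ) : ℂ)) *
      MvPolynomial.X 0 ^ (k - j) *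
      Polynomial.aeval (2 * MvPolynomial.X 0 * MvPolynomial.X 1 - 1)
        (jacobiP μ ((k - j : ℕ) : ℝ) j)
  else
    MvPolynomial.C ((((k.factorial : ℝ) / ((ascPochhammer ℝ k).eval (μ + 1)) : ℝ) : ℂ)) *
      MvPolynomial.X 1 ^ (j - k) *
      Polynomial.aeval (2 * MvPolynomial.X 0 * MvPolynomial.X 1 - 1)
        (jacobiP μ ((j - k : ℕ) : ℝ) k)

/-! Put `u = zw - 1`, so that `2zw - 1 = 2u + 1`. With `n = min k j` and `β = |k - j|`,
`Q^μ_{k,j}` is `z^(k-j)` or `w^(j-k)` times the polynomial in `u` with coefficients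
`C(n,i) (n+μ+β+1)_i / (μ+1)_i`: the Jacobi polynomial normalised by `n!/(μ+1)_n`, rewritten in `u`.
The Euler operator `z ∂_z` is a derivation with `z ∂_z (z^a w^b) = a z^a w^b` and
`z ∂_z u = u + 1`, so it acts on `z^a w^b p(u)` as `z^a w^b (a p + (u + 1) p')`. Both ladder
relations thereby become identities between univariate polynomials, checked coefficientwise with
`(x)_{i+1} = (x)_i (x + i) = x (x + 1)_i` and `(i + 1) C(n, i+1) = (n - i) C(n, i)`. -/

section

open Polynomial Finset

theorem ascPochhammer_eval_add {S : Type*} [CommSemiring S] (n m : ℕ) (a : S) :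
    (ascPochhammer S (n + m)).eval a =
      (ascPochhammer S n).eval a * (ascPochhammer S m).eval (a + n) := by
  rw [← ascPochhammer_mul, eval_mul, eval_comp]
  simp

theorem ascPochhammer_succ_eval_left {S : Type*} [CommSemiring S] (n : ℕ) (a : S) :
    (ascPochhammer S (n + 1)).eval a = a * (ascPochhammer S n).eval (a + 1) := by
  rw [add_comm, ascPochhammer_eval_add]
  simp

theorem Nat.cast_choose_succ_mul {K : Type*} [Ring K] (n i : ℕ) :
    (n.choose (i + 1) * (i + 1) : K) = n.choose i * (n - i) := by
  rcases le_or_gt i n with h | h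
  · have := congrArg (Nat.cast : ℕ → K) (Nat.choose_succ_right_eq n i)
    push_cast [Nat.cast_sub h] at this
    exact this
  · simp [Nat.choose_eq_zero_of_lt h, Nat.choose_eq_zero_of_lt (Nat.lt_succ_of_lt h)]

theorem Polynomial.coeff_X_mul_derivative {R : Type*} [Semiring R] (p : R[X]) (i : ℕ) :
    (X * derivative p).coeff i = i * p.coeff i := by
  rcases i with _ | i
  · simp
  · rw [coeff_X_mul, coeff_derivative, ← Nat.cast_succ, Nat.cast_comm]

noncomputable def normalizedJacobiCoeff (α β : ℝ) (n i : ℕ) : ℝ :=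
  n.choose i * (ascPochhammer ℝ i).eval (n + α + β + 1) / (ascPochhammer ℝ i).eval (α + 1)

noncomputable def normalizedJacobi (α β : ℝ) (n : ℕ) : ℝ[X] :=
  ∑ i ∈ range (n + 1), C (normalizedJacobiCoeff α β n i) * X ^ i

theorem coeff_normalizedJacobi (α β : ℝ) (n i : ℕ) :
    (normalizedJacobi α β n).coeff i = normalizedJacobiCoeff α β n i := by
  simp only [normalizedJacobi, finsetSum_coeff, coeff_C_mul_X_pow, sum_ite_eq, mem_range]
  split_ifs with h
  · rfl
  · simp [normalizedJacobiCoeff, Nat.choose_eq_zero_of_lt (by omega : n < i)]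

theorem normalizedJacobiCoeff_eq_div {α : ℝ} (hα : -1 < α) (β : ℝ) {n i : ℕ}
    (hi : i ≤ n) :
    normalizedJacobiCoeff α β n i =
      n.choose i * (ascPochhammer ℝ (n - i)).eval (i + α + 1) *
        (ascPochhammer ℝ i).eval (n + α + β + 1) / (ascPochhammer ℝ n).eval (α + 1) := by
  obtain ⟨l, rfl⟩ := Nat.exists_eq_add_of_le hi
  have hP := ascPochhammer_pos i (α + 1) (by linarith)
  have hQ := ascPochhammer_pos l (α + 1 + i) (by linarith [i.cast_nonneg (α := ℝ)])
  rw [normalizedJacobiCoeff, ascPochhammer_eval_add, Nat.add_sub_cancel_left,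
    show (i : ℝ) + α + 1 = α + 1 + i by ring]
  field_simp

theorem normalizedJacobi_eq_comp {α : ℝ} (hα : -1 < α) (β : ℝ) (n : ℕ) :
    normalizedJacobi α β n =
      C (n.factorial / (ascPochhammer ℝ n).eval (α + 1)) *
        (jacobiP α β n).comp (C 2 * X + 1) := by
  have hX : ((X - 1) * C 2⁻¹ : ℝ[X]).comp (C 2 * X + 1) = X := by
    simp only [mul_comp, sub_comp, X_comp, C_comp, one_comp, add_sub_cancel_right,
      mul_comm (C (2 : ℝ)), mul_assoc, ← C_mul]
    norm_num
  simp only [normalizedJacobi, jacobiP, Polynomial.sum_comp, mul_comp, pow_comp, C_comp, hX,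
    smul_eq_C_mul, mul_sum]
  refine sum_congr rfl fun i hi => ?_
  rw [normalizedJacobiCoeff_eq_div hα β (Nat.lt_succ_iff.mp (mem_range.mp hi))]
  simp only [← mul_assoc, ← C_mul]
  congr 2
  field_simp

theorem normalizedJacobiCoeff_raise {α : ℝ} (hα : -1 < α) (β : ℝ) (n i : ℕ) :
    (n + α + β + 1 + i) * normalizedJacobiCoeff α β n i +
        (i + 1) * normalizedJacobiCoeff α β n (i + 1) =
      (n + α + β + 1) * (n + α + 1) / (α + 1) * normalizedJacobiCoeff (α + 1) β n i := by
  unfold normalizedJacobiCoeff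
  set N : ℝ := n + α + β + 1
  have hN : (ascPochhammer ℝ i).eval N * (N + i) = N * (ascPochhammer ℝ i).eval (N + 1) := by
    rw [← ascPochhammer_succ_eval, ascPochhammer_succ_eval_left]
  have hA : (ascPochhammer ℝ i).eval (α + 1) * (α + 1 + i) =
      (α + 1) * (ascPochhammer ℝ i).eval (α + 1 + 1) := by
    rw [← ascPochhammer_succ_eval, ascPochhammer_succ_eval_left]
  have hc := Nat.cast_choose_succ_mul (K := ℝ) n i
  rw [show (n : ℝ) + (α + 1) + β + 1 = N + 1 by ring, ascPochhammer_succ_eval_left i N,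
    ascPochhammer_succ_eval_left i (α + 1)]
  have hα1 : 0 < α + 1 := by linarith
  have hP := ascPochhammer_pos i (α + 1) hα1
  have hQ := ascPochhammer_pos i (α + 1 + 1) (by linarith)
  field_simp
  linear_combination (n.choose i : ℝ) * (α + 1) * (ascPochhammer ℝ i).eval (α + 1 + 1) * hN -
    (n.choose i : ℝ) * N * (ascPochhammer ℝ i).eval (N + 1) * hA +
    N * (ascPochhammer ℝ i).eval (α + 1) * (ascPochhammer ℝ i).eval (N + 1) * hc

theorem normalizedJacobiCoeff_lower {α : ℝ} (hα : 0 < α) (β : ℝ) (n i : ℕ) :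
    (n - i) * normalizedJacobiCoeff α β n i =
      (i + 1 + α) * normalizedJacobiCoeff α β n (i + 1) -
        α * normalizedJacobiCoeff (α - 1) β n (i + 1) := by
  unfold normalizedJacobiCoeff
  set N : ℝ := n + α + β + 1
  rw [show (n : ℝ) + (α - 1) + β + 1 = N - 1 by ring, sub_add_cancel,
    ascPochhammer_succ_eval_left i (N - 1), sub_add_cancel, ascPochhammer_succ_eval_left i α,
    ascPochhammer_succ_eval i N, ascPochhammer_succ_eval i (α + 1)]
  have hc := Nat.cast_choose_succ_mul (K := ℝ) n i
  have hP := ascPochhammer_pos i (α + 1) (by linarith)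
  field_simp
  linear_combination -((ascPochhammer ℝ i).eval N * (α + 1 + i)) * hc

theorem normalizedJacobi_raise {α : ℝ} (hα : -1 < α) (β : ℝ) (n : ℕ) :
    C (n + α + β + 1) * normalizedJacobi α β n +
        (X + 1) * derivative (normalizedJacobi α β n) =
      C ((n + α + β + 1) * (n + α + 1) / (α + 1)) * normalizedJacobi (α + 1) β n := by
  ext i
  simp only [coeff_add, coeff_C_mul, add_mul, one_mul, coeff_derivative, coeff_X_mul_derivative,
    coeff_normalizedJacobi]
  linear_combination normalizedJacobiCoeff_raise hα β n i

theorem normalizedJacobi_lower {α : ℝ} (hα : 0 < α) (β : ℝ) (n : ℕ) :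
    X * (C (n : ℝ) * normalizedJacobi α β n - (X + 1) * derivative (normalizedJacobi α β n)) -
        C α * normalizedJacobi α β n =
      -(C α * normalizedJacobi (α - 1) β n) := by
  ext (_ | i)
  · simp [coeff_normalizedJacobi, normalizedJacobiCoeff]
  · simp only [coeff_add, coeff_sub, coeff_neg, coeff_C_mul, add_mul, one_mul, coeff_derivative,
      coeff_X_mul, coeff_X_mul_derivative, coeff_normalizedJacobi]
    linear_combination normalizedJacobiCoeff_lower hα β n i

end

open MvPolynomial

theorem MvPolynomial.pderiv_aeval {R S σ : Type*} [CommSemiring R] [CommSemiring S] [Algebra R S]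
    (i : σ) (p : Polynomial R) (x : MvPolynomial σ S) :
    pderiv i (Polynomial.aeval x p) = Polynomial.aeval x (Polynomial.derivative p) * pderiv i x :=
  ((pderiv i).restrictScalars R).map_aeval p x

theorem MvPolynomial.X_mul_pderiv_X_pow {R σ : Type*} [CommSemiring R] (i : σ) (a : ℕ) :
    X i * pderiv i (X i ^ a : MvPolynomial σ R) = (a : MvPolynomial σ R) * X i ^ a := by
  rcases a with _ | a
  · simp
  · rw [pderiv_pow, pderiv_X_self, Nat.add_sub_cancel, pow_succ]
    push_cast
    ring

theorem X_mul_pderiv_monomial_mul_aeval (a b : ℕ) (p : Polynomial ℝ) :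
    X 0 * pderiv 0 (X 0 ^ a * X 1 ^ b * Polynomial.aeval (X 0 * X 1 - 1) p :
        MvPolynomial (Fin 2) ℂ) =
      X 0 ^ a * X 1 ^ b * Polynomial.aeval (X 0 * X 1 - 1)
        (Polynomial.C (a : ℝ) * p + (Polynomial.X + 1) * Polynomial.derivative p) := by
  have hb : pderiv 0 (X 1 ^ b : MvPolynomial (Fin 2) ℂ) = 0 := by simp
  have hU : pderiv 0 (X 0 * X 1 - 1 : MvPolynomial (Fin 2) ℂ) = X 1 := by
    simp [Derivation.leibniz]
  rw [pderiv_mul, pderiv_mul, pderiv_aeval, hb, hU]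
  simp only [map_add, map_mul, map_one, map_natCast, Polynomial.aeval_X]
  linear_combination (X 1 ^ b * Polynomial.aeval (X 0 * X 1 - 1) p : MvPolynomial (Fin 2) ℂ) *
    X_mul_pderiv_X_pow (R := ℂ) (0 : Fin 2) a

noncomputable def zernikeForm (α β : ℝ) (a b n : ℕ) : MvPolynomial (Fin 2) ℂ :=
  X 0 ^ a * X 1 ^ b * Polynomial.aeval (X 0 * X 1 - 1) (normalizedJacobi α β n)

-- Truncated subtraction makes one of the exponents `k - j`, `j - k` vanish, which merges the
-- two branches of `zernikeQ`.
theorem zernikeQ_eq_zernikeForm {μ : ℝ} (hμ : -1 < μ) (k j : ℕ) :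
    zernikeQ μ k j = zernikeForm μ (Nat.dist k j) (k - j) (j - k) (min k j) := by
  have haeval (m n : ℕ) :
      C (((n.factorial / (ascPochhammer ℝ n).eval (μ + 1) : ℝ)) : ℂ) *
          Polynomial.aeval (2 * X 0 * X 1 - 1 : MvPolynomial (Fin 2) ℂ) (jacobiP μ m n) =
        Polynomial.aeval (X 0 * X 1 - 1) (normalizedJacobi μ m n) := by
    rw [normalizedJacobi_eq_comp hμ, map_mul, Polynomial.aeval_C, Polynomial.aeval_comp,
      MvPolynomial.algebraMap_apply]
    congr 3
    simp only [map_add, map_mul, Polynomial.aeval_X, map_one, map_ofNat]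
    ring
  unfold zernikeQ zernikeForm Nat.dist
  split_ifs with h
  · rw [Nat.sub_eq_zero_of_le h, add_zero, pow_zero, mul_one, min_eq_right h, ← haeval]
    ring
  · rw [Nat.sub_eq_zero_of_le (by omega : k ≤ j), zero_add, pow_zero, one_mul,
      min_eq_left (by omega), ← haeval]
    ring

theorem zernikeForm_raise {α : ℝ} (hα : -1 < α) (β : ℝ) (a b n : ℕ) {s : ℝ}
    (hs : a + s = n + α + β + 1) :
    X 0 * pderiv 0 (zernikeForm α β a b n) + C (s : ℂ) * zernikeForm α β a b n =
      C (((n + α + β + 1) * (n + α + 1) / (α + 1) : ℝ) : ℂ) *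
        zernikeForm (α + 1) β a b n := by
  have h := congrArg
    (X 0 ^ a * X 1 ^ b * Polynomial.aeval (X 0 * X 1 - 1 : MvPolynomial (Fin 2) ℂ) ·)
    (normalizedJacobi_raise hα β n)
  nth_rewrite 1 [← hs] at h
  simp only [map_add, map_mul, map_one, Polynomial.aeval_C, Polynomial.aeval_X,
    MvPolynomial.algebraMap_apply, Complex.coe_algebraMap] at h
  unfold zernikeForm
  rw [X_mul_pderiv_monomial_mul_aeval]
  simp only [map_add, map_mul, map_one, Polynomial.aeval_C, Polynomial.aeval_X,
    MvPolynomial.algebraMap_apply, Complex.coe_algebraMap]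
  linear_combination h

theorem zernikeForm_lower {α : ℝ} (hα : 0 < α) (β : ℝ) (a b n : ℕ) {κ : ℝ}
    (hκ : κ - a = n) :
    (1 - X 0 * X 1) * (X 0 * pderiv 0 (zernikeForm α β a b n)) -
        (C (κ : ℂ) * (1 - X 0 * X 1) + C (α : ℂ)) * zernikeForm α β a b n =
      -(C (α : ℂ) * zernikeForm (α - 1) β a b n) := by
  have h := congrArg
    (X 0 ^ a * X 1 ^ b * Polynomial.aeval (X 0 * X 1 - 1 : MvPolynomial (Fin 2) ℂ) ·)
    (normalizedJacobi_lower hα β n)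
  rw [← hκ] at h
  simp only [map_add, map_sub, map_neg, map_mul, map_one, Polynomial.aeval_C, Polynomial.aeval_X,
    MvPolynomial.algebraMap_apply, Complex.coe_algebraMap] at h
  unfold zernikeForm
  rw [X_mul_pderiv_monomial_mul_aeval]
  simp only [map_add, map_mul, map_one, Polynomial.aeval_C, Polynomial.aeval_X,
    MvPolynomial.algebraMap_apply, Complex.coe_algebraMap]
  linear_combination h

open MvPolynomial in
theorem zernike_ladder_Z3 (μ : ℝ) (k j : ℕ) :
    (μ > -1 →
      X 0 * pderiv (0 : Fin 2) (zernikeQ μ k j) +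
          C ((((j : ℝ) + μ + 1 : ℝ)) : ℂ) * zernikeQ μ k j =
        C (((((k : ℝ) + μ + 1) * ((j : ℝ) + μ + 1) / (μ + 1) : ℝ)) : ℂ) *
          zernikeQ (μ + 1) k j) ∧
    (μ > 0 →
      (1 - X 0 * X 1) * (X 0 * pderiv (0 : Fin 2) (zernikeQ μ k j)) -
          (C (((k : ℝ)) : ℂ) * (1 - X 0 * X 1) + C ((μ : ℂ))) * zernikeQ μ k j =
        -(C ((μ : ℂ)) * zernikeQ (μ - 1) k j)) := by
  have hQ (ν : ℝ) (hν : -1 < ν) :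
      zernikeQ ν k j = zernikeForm ν (Nat.dist k j) (k - j) (j - k) (min k j) :=
    zernikeQ_eq_zernikeForm hν k j
  have hmin : ((min k j : ℕ) : ℝ) + (k - j : ℕ) = k := by
    exact_mod_cast (by omega : min k j + (k - j) = k)
  have hmax : ((min k j : ℕ) : ℝ) + Nat.dist k j = (k - j : ℕ) + j := by
    exact_mod_cast (by unfold Nat.dist; omega : min k j + Nat.dist k j = k - j + j)
  constructor
  · intro hμ
    have hρ : ((k : ℝ) + μ + 1) * (j + μ + 1) / (μ + 1) =
        (min k j + μ + Nat.dist k j + 1) * (min k j + μ + 1) / (μ + 1) := by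
      rcases le_total j k with h | h <;>
        simp only [h, min_eq_left, min_eq_right, Nat.dist, Nat.sub_eq_zero_of_le, Nat.cast_sub,
          add_zero, zero_add] <;> ring
    rw [hQ μ hμ, hQ (μ + 1) (by linarith), hρ]
    exact zernikeForm_raise hμ _ _ _ _ (by linarith)
  · intro hμ
    rw [hQ μ (by linarith), hQ (μ - 1) (by linarith)]
    exact zernikeForm_lower hμ _ _ _ _ (by linarith)
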